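/- arXiv:2510.14569 — 3 statements merged into one kernel-verified Lean document; each statement's English description precedes it below -/
import Mathlib

section
/- In PSL(2,q) with q an odd prime power, there exist a maximal torus S (cyclic of order (q−ε)/2 for ε = ±1) and an involution (diagonal automorphism) α of PSL(2,q) such that α centralizes S and inverts another maximal torus R, i.e., r^α = r^{-1} for all r ∈ R. -/
open Matrix MatrixGroups

abbrev PSL2 (F : Type*) [Field F] :=
  SL(2, F) ⧸ Subgroup.center (SL(2, F))

namespace PSLaux

variable {F : Type*} [Field F]

/-- Build an element of `SL(2, F)` (typed as such). -/
def mkSL (A : Matrix (Fin 2) (Fin 2) F) (h : A.det = 1) : SL(2, F) := ⟨A, h⟩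

@[simp] lemma mkSL_val (A : Matrix (Fin 2) (Fin 2) F) (h : A.det = 1) :
    ((mkSL A h : SL(2, F)) : Matrix (Fin 2) (Fin 2) F) = A := rfl

/-- The diagonal torus homomorphism. -/
def dm : Fˣ →* SL(2, F) where
  toFun a := mkSL !![(a : F), 0; 0, ((a⁻¹ : Fˣ) : F)] (by
    simp [Matrix.det_fin_two_of])
  map_one' := by ext i j; fin_cases i <;> fin_cases j <;> simp
  map_mul' a b := by
    ext i j
    fin_cases i <;> fin_cases j <;>
      simp [Matrix.mul_apply, Fin.sum_univ_two, Fin.mk_zero, Fin.mk_one] <;> ring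

lemma dm_injective : Function.Injective (dm (F := F)) := by
  intro a b h
  have := congrArg (fun M : SL(2, F) => M.1 0 0) h
  simpa [dm, Units.ext_iff] using this

/-- The nonsplit (or split) torus attached to `δ`. -/
def Tsub (δ : F) : Subgroup SL(2, F) where
  carrier := {M | M.1 1 1 = M.1 0 0 ∧ M.1 0 1 = δ * M.1 1 0}
  one_mem' := by
    constructor <;> simp
  mul_mem' := by
    rintro M N ⟨hM1, hM2⟩ ⟨hN1, hN2⟩
    constructor <;>
      simp only [Matrix.SpecialLinearGroup.coe_mul, Matrix.mul_apply,
        Fin.sum_univ_two, hM1, hM2, hN1, hN2] <;> ring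
  inv_mem' := by
    rintro M ⟨hM1, hM2⟩
    rw [Matrix.SpecialLinearGroup.SL2_inv_expl M]
    constructor <;> simp [hM1, hM2]

lemma mem_Tsub_iff {δ : F} {M : SL(2, F)} :
    M ∈ Tsub δ ↔ M.1 1 1 = M.1 0 0 ∧ M.1 0 1 = δ * M.1 1 0 := Iff.rfl

lemma Tsub_det {δ : F} {M : SL(2, F)} (h : M ∈ Tsub δ) :
    M.1 0 0 ^ 2 - δ * M.1 1 0 ^ 2 = 1 := by
  have hd := M.2
  rw [Matrix.det_fin_two] at hd
  rw [mem_Tsub_iff] at h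
  rw [h.1, h.2] at hd
  linear_combination hd

lemma Tsub_comm {δ : F} {M N : SL(2, F)} (hM : M ∈ Tsub δ) (hN : N ∈ Tsub δ) :
    M * N = N * M := by
  rw [mem_Tsub_iff] at hM hN
  ext i j
  fin_cases i <;> fin_cases j <;>
    simp only [Matrix.SpecialLinearGroup.coe_mul, Matrix.mul_apply,
      Fin.sum_univ_two, Fin.mk_zero, Fin.mk_one, hM.1, hM.2, hN.1, hN.2] <;> ring

lemma neg_one_mem_Tsub {δ : F} : (-1 : SL(2, F)) ∈ Tsub δ := by
  rw [mem_Tsub_iff]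
  constructor <;>
    simp [Matrix.SpecialLinearGroup.coe_neg]

lemma dm_neg_one : dm (-1 : Fˣ) = (-1 : SL(2, F)) := by
  ext i j
  fin_cases i <;> fin_cases j <;>
    simp [dm, Matrix.SpecialLinearGroup.coe_neg, Fin.mk_zero, Fin.mk_one] <;> norm_num


/-- Constructor for torus elements. -/
def tmk (δ a b : F) (h : a ^ 2 - δ * b ^ 2 = 1) : Tsub (F := F) δ :=
  ⟨mkSL !![a, δ * b; b, a] (by rw [Matrix.det_fin_two_of]; linear_combination h), by
    rw [mem_Tsub_iff]; constructor <;> simp⟩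

lemma card_Tsub [Fintype F] {δ : F} (h2 : (2 : F) ≠ 0) (hδ : ¬ IsSquare δ) :
    Nat.card (Tsub (F := F) δ) = Fintype.card F + 1 := by
  have hδ0 : δ ≠ 0 := fun h => hδ ⟨0, by rw [h]; ring⟩
  have hne : ∀ t : F, 1 - δ * t ^ 2 ≠ 0 := by
    intro t h
    have ht : t ≠ 0 := by rintro rfl; simp at h
    apply hδ
    refine ⟨t⁻¹, ?_⟩
    field_simp
    linear_combination -h
  have key : ∀ M : Tsub (F := F) δ, (M.1.1 0 0) ^ 2 - δ * (M.1.1 1 0) ^ 2 = 1 :=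
    fun M => Tsub_det M.2
  classical
  let e : Option F ≃ Tsub (F := F) δ :=
  { toFun := fun o => match o with
      | none => tmk δ (-1) 0 (by ring)
      | some t => tmk δ ((1 + δ * t ^ 2) / (1 - δ * t ^ 2)) (2 * t / (1 - δ * t ^ 2))
        (by
          rw [div_pow, div_pow, ← mul_div_assoc, ← sub_div,
            div_eq_one_iff_eq (pow_ne_zero 2 (hne t))]
          ring)
    invFun := fun M => if M.1.1 0 0 = -1 then none else some (M.1.1 1 0 / (1 + M.1.1 0 0))
    left_inv := by
      rintro (_ | t)
      · simp only [Option.elim_none]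
        simp [tmk]
      · simp only [Option.elim_some]
        have hden := hne t
        have hfix : (1 + δ * t ^ 2) / (1 - δ * t ^ 2) ≠ -1 := by
          intro h
          rw [div_eq_iff hden] at h
          apply h2
          linear_combination h
        simp only [tmk]
        erw [if_neg (by simpa using hfix)]
        congr 1
        have h1pa : 1 + (1 + δ * t ^ 2) / (1 - δ * t ^ 2) = 2 / (1 - δ * t ^ 2) := by
          field_simp
          ring
        simp only [mkSL_val, Matrix.of_apply, Matrix.cons_val', Matrix.cons_val_zero,
          Matrix.cons_val_one, Matrix.head_cons, Matrix.empty_val',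
          Matrix.cons_val_fin_one, Matrix.head_fin_const]
        rw [h1pa]
        field_simp
        exact mul_div_cancel_right₀ t (by rwa [mul_comm] at hden)
    right_inv := by
      intro M
      dsimp only
      obtain ⟨hM1, hM2⟩ := (mem_Tsub_iff).mp M.2
      have hkey := key M
      set a := M.1.1 0 0 with ha
      set b := M.1.1 1 0 with hb
      by_cases hma : a = -1
      · have hb0 : b = 0 := by
          have : δ * b ^ 2 = 0 := by rw [hma] at hkey; linear_combination -hkey
          rcases mul_eq_zero.mp this with h | h
          · exact absurd h hδ0
          · exact pow_eq_zero_iff (n := 2) (by norm_num) |>.mp h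
        rw [if_pos hma]
        apply Subtype.ext; apply Subtype.ext
        ext i j
        fin_cases i <;> fin_cases j <;>
          simp [tmk, Fin.mk_zero, Fin.mk_one, ← ha, ← hb, hma, hb0, hM1, hM2]
      · rw [if_neg hma]
        have h1a : 1 + a ≠ 0 := fun h => hma (by linear_combination h)
        have hden : 1 - δ * (b / (1 + a)) ^ 2 = 2 / (1 + a) := by
          field_simp
          linear_combination hkey
        have hnum : 1 + δ * (b / (1 + a)) ^ 2 = 2 * a / (1 + a) := by
          field_simp
          linear_combination -hkey
        apply Subtype.ext; apply Subtype.ext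
        ext i j
        have hA : (1 + δ * (b / (1 + a)) ^ 2) / (1 - δ * (b / (1 + a)) ^ 2) = a := by
          rw [hden, hnum]
          field_simp
        have hB : 2 * (b / (1 + a)) / (1 - δ * (b / (1 + a)) ^ 2) = b := by
          rw [hden]
          field_simp
        fin_cases i <;> fin_cases j <;>
          simp [tmk, Fin.mk_zero, Fin.mk_one, ← ha, ← hb, hA, hB, hM1, hM2] }
  rw [← Nat.card_congr e, Nat.card_eq_fintype_card, Fintype.card_option]


lemma Tsub_mul_entries {δ : F} {M N : SL(2, F)} (hM : M ∈ Tsub δ) (hN : N ∈ Tsub δ) :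
    (M * N).1 0 0 = M.1 0 0 * N.1 0 0 + δ * (M.1 1 0 * N.1 1 0) ∧
    (M * N).1 1 0 = M.1 1 0 * N.1 0 0 + M.1 0 0 * N.1 1 0 := by
  rw [mem_Tsub_iff] at hM hN
  constructor <;>
    simp only [Matrix.SpecialLinearGroup.coe_mul, Matrix.mul_apply, Fin.sum_univ_two,
      hM.1, hM.2, hN.1, hN.2] <;> ring

open Polynomial in
lemma isCyclic_Tsub [Finite F] {δ : F} (hδ : ¬ IsSquare δ) :
    IsCyclic (Tsub (F := F) δ) := by
  haveI : Fact (Irreducible (X ^ 2 - C δ)) :=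
    ⟨X_pow_sub_C_irreducible_of_prime Nat.prime_two
      (fun b hb => hδ ⟨b, by rw [← hb]; ring⟩)⟩
  set K := AdjoinRoot (X ^ 2 - C δ) with hK
  let rt : K := AdjoinRoot.root (X ^ 2 - C δ)
  let em : F →+* K := AdjoinRoot.of (X ^ 2 - C δ)
  have hr2 : rt ^ 2 = em δ := by
    have h := AdjoinRoot.eval₂_root (X ^ 2 - C δ)
    simp only [Polynomial.eval₂_sub, Polynomial.eval₂_pow, Polynomial.eval₂_X,
      Polynomial.eval₂_C] at h
    linear_combination h
  have hem : Function.Injective em := em.injective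
  have hvi : ∀ M : Tsub (F := F) δ,
      (em (M.1.1 0 0) + em (M.1.1 1 0) * rt) * (em (M.1.1 0 0) - em (M.1.1 1 0) * rt) = 1 := by
    intro M
    have hk : em (M.1.1 0 0) ^ 2 - em δ * em (M.1.1 1 0) ^ 2 = 1 := by
      rw [← _root_.map_pow, ← _root_.map_pow, ← _root_.map_mul, ← _root_.map_sub, Tsub_det M.2, _root_.map_one]
    linear_combination hk - (em (M.1.1 1 0)) ^ 2 * hr2
  let f : Tsub (F := F) δ →* Kˣ :=
  { toFun := fun M => ⟨em (M.1.1 0 0) + em (M.1.1 1 0) * rt,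
      em (M.1.1 0 0) - em (M.1.1 1 0) * rt, hvi M, by rw [mul_comm]; exact hvi M⟩
    map_one' := by
      ext
      simp
    map_mul' := by
      intro M N
      ext
      have h00 := (Tsub_mul_entries M.2 N.2).1
      have h10 := (Tsub_mul_entries M.2 N.2).2
      show em ((M.1 * N.1).1 0 0) + em ((M.1 * N.1).1 1 0) * rt = _
      rw [h00, h10]
      simp only [_root_.map_add, _root_.map_mul]
      show _ = (em (M.1.1 0 0) + em (M.1.1 1 0) * rt) * (em (N.1.1 0 0) + em (N.1.1 1 0) * rt)
      linear_combination (- em (M.1.1 1 0) * em (N.1.1 1 0)) * hr2 }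
  have hrtn : ∀ c : F, rt ≠ em c := by
    intro c hc
    refine hδ ⟨c, hem ?_⟩
    rw [_root_.map_mul, ← hc, ← pow_two, hr2]
  have hinj : Function.Injective f := by
    intro M N h
    have hval : em (M.1.1 0 0) + em (M.1.1 1 0) * rt
        = em (N.1.1 0 0) + em (N.1.1 1 0) * rt := by
      have := congrArg Units.val h
      simpa [f] using this
    have hbd : M.1.1 1 0 = N.1.1 1 0 := by
      by_contra hbd
      have hne : em (M.1.1 1 0 - N.1.1 1 0) ≠ 0 := fun hc =>
        hbd (sub_eq_zero.mp (hem (by rw [hc, _root_.map_zero])))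
      apply hrtn ((N.1.1 0 0 - M.1.1 0 0) / (M.1.1 1 0 - N.1.1 1 0))
      rw [map_div₀, eq_div_iff hne, _root_.map_sub, _root_.map_sub]
      linear_combination hval
    have had : M.1.1 0 0 = N.1.1 0 0 := by
      apply hem
      rw [hbd] at hval
      linear_combination hval
    obtain ⟨hM1, hM2⟩ := mem_Tsub_iff.mp M.2
    obtain ⟨hN1, hN2⟩ := mem_Tsub_iff.mp N.2
    apply Subtype.ext; apply Subtype.ext
    ext i j
    fin_cases i <;> fin_cases j <;>
      simp only [Fin.mk_zero, Fin.mk_one, hM1, hM2, hN1, hN2, hbd, had]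
  haveI : Finite f.range := Finite.of_surjective f.rangeRestrict f.rangeRestrict_surjective
  exact isCyclic_of_surjective (MonoidHom.ofInjective hinj).symm.toMonoidHom
    (MonoidHom.ofInjective hinj).symm.surjective


lemma mem_center_iff'' {A : SL(2, F)} :
    A ∈ Subgroup.center SL(2, F) ↔ A = 1 ∨ A = -1 := by
  rw [Matrix.SpecialLinearGroup.mem_center_iff]
  constructor
  · rintro ⟨r, hr1, hr2⟩
    rw [Fintype.card_fin, pow_two] at hr1
    rcases mul_self_eq_one_iff.mp hr1 with rfl | rfl
    · left; apply Subtype.ext; rw [← hr2]; simp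
    · right; apply Subtype.ext; rw [← hr2]
      simp only [Matrix.SpecialLinearGroup.coe_neg, Matrix.SpecialLinearGroup.coe_one]
      simp only [Matrix.scalar_apply]
      ext i j
      by_cases h : i = j <;> simp [Matrix.diagonal_apply, Matrix.one_apply, h]
  · rintro (rfl | rfl)
    · exact ⟨1, by norm_num, by simp⟩
    · refine ⟨-1, by norm_num, ?_⟩
      simp only [Matrix.SpecialLinearGroup.coe_neg, Matrix.SpecialLinearGroup.coe_one,
        Matrix.scalar_apply]
      ext i j
      by_cases h : i = j <;> simp [Matrix.diagonal_apply, Matrix.one_apply, h]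

lemma one_ne_neg_one (hch : ringChar F ≠ 2) : (1 : SL(2, F)) ≠ -1 := by
  intro h
  have h0 := congrArg (fun M : SL(2, F) => M.1 0 0) h
  simp only [Matrix.SpecialLinearGroup.coe_one, Matrix.SpecialLinearGroup.coe_neg] at h0
  simp only [Matrix.one_apply_eq, Matrix.neg_apply] at h0
  exact Ring.neg_one_ne_one_of_char_ne_two hch h0.symm

lemma card_ker_aux (hch : ringChar F ≠ 2) (H : Subgroup SL(2, F))
    (hneg : (-1 : SL(2, F)) ∈ H) :
    2 * Nat.card (H.map (QuotientGroup.mk' (Subgroup.center SL(2, F)))) = Nat.card H := by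
  classical
  set π := QuotientGroup.mk' (Subgroup.center (SL(2, F))) with hπ
  set f := π.comp H.subtype with hf
  have hrange : H.map π = f.range := by
    rw [hf, MonoidHom.range_comp, Subgroup.range_subtype]
  have hker : (f.ker : Set H) = {1, ⟨-1, hneg⟩} := by
    ext x
    simp only [SetLike.mem_coe, MonoidHom.mem_ker, hf, MonoidHom.comp_apply, hπ,
      QuotientGroup.mk'_apply, Subgroup.coe_subtype]
    rw [QuotientGroup.eq_one_iff, mem_center_iff'']
    simp only [Set.mem_insert_iff, Set.mem_singleton_iff, Subtype.ext_iff]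
    rfl
  have hkc : Nat.card f.ker = 2 := by
    have hne : (1 : H) ≠ ⟨-1, hneg⟩ := by
      intro h
      exact one_ne_neg_one hch (Subtype.ext_iff.mp h)
    have : Nat.card f.ker = ((f.ker : Set H)).ncard := (Nat.card_coe_set_eq _).symm
    rw [this, hker, Set.ncard_pair hne]
  have hq : Nat.card H = Nat.card (H ⧸ f.ker) * Nat.card f.ker :=
    Subgroup.card_eq_card_quotient_mul_card_subgroup f.ker
  have hqr : Nat.card (H ⧸ f.ker) = Nat.card f.range :=
    Nat.card_congr (QuotientGroup.quotientKerEquivRange f).toEquiv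
  rw [hrange, hq, hqr, hkc, mul_comm]

lemma master (hch : ringChar F ≠ 2) (Hs Hr : Subgroup SL(2, F))
    (hs : IsCyclic Hs) (hr : IsCyclic Hr)
    (hnegs : (-1 : SL(2, F)) ∈ Hs) (hnegr : (-1 : SL(2, F)) ∈ Hr)
    (z : SL(2, F)) (hz2 : z ^ 2 = -1)
    (hcomm : ∀ M ∈ Hs, z * M = M * z)
    (hinv : ∀ M ∈ Hr, z * M * z⁻¹ = M⁻¹)
    (u : SL(2, F)) (hu1 : z * u * z⁻¹ ≠ u) (hu2 : z * u * z⁻¹ ≠ -u) :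
    ∃ (S R : Subgroup (PSL2 F)) (α : MulAut (PSL2 F)),
      α ^ 2 = 1 ∧ α ≠ 1 ∧ IsCyclic S ∧ IsCyclic R ∧
      2 * Nat.card S = Nat.card Hs ∧ 2 * Nat.card R = Nat.card Hr ∧
      (∀ s ∈ S, α s = s) ∧ (∀ r ∈ R, α r = r⁻¹) := by
  set π := QuotientGroup.mk' (Subgroup.center (SL(2, F))) with hπ
  have hcycS : IsCyclic (Hs.map π) := by
    have hh : Hs.map π = (π.comp Hs.subtype).range := by
      rw [MonoidHom.range_comp, Subgroup.range_subtype]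
    rw [hh]
    exact isCyclic_of_surjective _ (π.comp Hs.subtype).rangeRestrict_surjective
  have hcycR : IsCyclic (Hr.map π) := by
    have hh : Hr.map π = (π.comp Hr.subtype).range := by
      rw [MonoidHom.range_comp, Subgroup.range_subtype]
    rw [hh]
    exact isCyclic_of_surjective _ (π.comp Hr.subtype).rangeRestrict_surjective
  refine ⟨Hs.map π, Hr.map π, MulAut.conj (π z), ?_, ?_, hcycS, hcycR,
    card_ker_aux hch Hs hnegs, card_ker_aux hch Hr hnegr, ?_, ?_⟩
  · have h1 : (π z) ^ 2 = 1 := by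
      rw [← _root_.map_pow, hz2, hπ, QuotientGroup.mk'_apply, QuotientGroup.eq_one_iff]
      exact mem_center_iff''.mpr (Or.inr rfl)
    rw [← _root_.map_pow, h1, _root_.map_one]
  · intro hα
    have h1 : MulAut.conj (π z) (π u) = π u := by rw [hα]; rfl
    have h2 : π (z * u * z⁻¹) = π u := by
      rw [_root_.map_mul, _root_.map_mul, map_inv]
      simpa [MulAut.conj_apply] using h1
    rw [hπ, QuotientGroup.mk'_eq_mk'] at h2
    obtain ⟨c, hc, hzc⟩ := h2
    rcases mem_center_iff''.mp hc with rfl | rfl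
    · exact hu1 (by simpa using hzc)
    · rw [mul_neg_one] at hzc
      exact hu2 (neg_eq_iff_eq_neg.mp hzc)
  · rintro s ⟨M, hM, rfl⟩
    show MulAut.conj (π z) (π M) = π M
    rw [MulAut.conj_apply, ← map_inv, ← _root_.map_mul, ← _root_.map_mul]
    congr 1
    rw [mul_inv_eq_iff_eq_mul]
    exact hcomm M hM
  · rintro r ⟨M, hM, rfl⟩
    show MulAut.conj (π z) (π M) = (π M)⁻¹
    rw [MulAut.conj_apply, ← map_inv, ← _root_.map_mul, ← _root_.map_mul, ← map_inv]
    congr 1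
    exact hinv M hM


def u0 : SL(2, F) := mkSL !![1, 1; 0, 1] (by simp [Matrix.det_fin_two_of])

def wSL : SL(2, F) := mkSL !![0, 1; -1, 0] (by simp [Matrix.det_fin_two_of])

lemma iu_inv_val {iu : Fˣ} (hi : (iu : F) * iu = -1) : ((iu⁻¹ : Fˣ) : F) = -(iu : F) := by
  have hone : (iu : F) * (-(iu : F)) = 1 := by rw [mul_neg, hi, neg_neg]
  rw [Units.val_inv_eq_inv_val]
  exact inv_eq_of_mul_eq_one_right hone

lemma zA_inv {δ : F} {iu : Fˣ} (hi : (iu : F) * iu = -1) {M : SL(2, F)} (hM : M ∈ Tsub δ) :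
    dm iu * M * (dm iu)⁻¹ = M⁻¹ := by
  obtain ⟨hM1, hM2⟩ := mem_Tsub_iff.mp hM
  have hinv2 : ((iu⁻¹ : Fˣ) : F) = -(iu : F) := iu_inv_val hi
  rw [mul_inv_eq_iff_eq_mul, Matrix.SpecialLinearGroup.SL2_inv_expl M]
  ext i j
  erw [Matrix.SpecialLinearGroup.coe_mul, Matrix.SpecialLinearGroup.coe_mul, Matrix.mul_apply,
    Matrix.mul_apply]
  fin_cases i <;> fin_cases j <;>
    simp only [dm, MonoidHom.coe_mk, OneHom.coe_mk, Matrix.SpecialLinearGroup.coe_mul, mkSL_val,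
      Matrix.mul_apply, Fin.sum_univ_two, Fin.mk_zero, Fin.mk_one, hM1, hM2, hinv2,
      Matrix.of_apply, Matrix.cons_val', Matrix.cons_val_zero, Matrix.cons_val_one,
      Matrix.head_cons, Matrix.empty_val', Matrix.cons_val_fin_one, Matrix.head_fin_const] <;>
    ring

lemma zA_sq {iu : Fˣ} (hi : (iu : F) * iu = -1) : (dm iu) ^ 2 = (-1 : SL(2, F)) := by
  rw [pow_two, ← _root_.map_mul]
  have : iu * iu = (-1 : Fˣ) := by
    ext
    rw [Units.val_mul, hi]
    simp
  rw [this, dm_neg_one]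

lemma wSL_mem : (wSL : SL(2, F)) ∈ Tsub (-1) := by
  constructor <;> simp [wSL] <;> norm_num

lemma wSL_sq : (wSL : SL(2, F)) ^ 2 = -1 := by
  rw [pow_two]
  ext i j
  fin_cases i <;> fin_cases j <;>
    simp [wSL, Matrix.SpecialLinearGroup.coe_neg, Matrix.mul_apply, Fin.sum_univ_two,
      Fin.mk_zero, Fin.mk_one]

lemma wSL_inv_dm (v : Fˣ) : (wSL : SL(2, F)) * dm v * wSL⁻¹ = (dm v)⁻¹ := by
  rw [← map_inv, mul_inv_eq_iff_eq_mul]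
  ext i j
  fin_cases i <;> fin_cases j <;>
    simp [wSL, dm, Matrix.mul_apply, Fin.sum_univ_two, Fin.mk_zero, Fin.mk_one]

end PSLaux

open PSLaux

theorem exists_tori_and_diagonal_involution (q : ℕ) (F : Type*) [Field F] [Fintype F]
    (hq : Fintype.card F = q) (hodd : Odd q) :
    ∃ (S R : Subgroup (PSL2 F)) (α : MulAut (PSL2 F)),
      α ^ 2 = 1 ∧ α ≠ 1 ∧
      IsCyclic S ∧ IsCyclic R ∧
      ((Nat.card S = (q - 1) / 2 ∧ Nat.card R = (q + 1) / 2) ∨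
        (Nat.card S = (q + 1) / 2 ∧ Nat.card R = (q - 1) / 2)) ∧
      (∀ s ∈ S, α s = s) ∧
      (∀ r ∈ R, α r = r⁻¹) := by
  classical
  subst hq
  have hch : ringChar F ≠ 2 := by
    intro h
    have := FiniteField.even_card_of_char_two h
    rw [Nat.odd_iff] at hodd
    omega
  have h2 : (2 : F) ≠ 0 := Ring.two_ne_zero hch
  have hodd' := Nat.odd_iff.mp hodd
  have hcardD : Nat.card (dm (F := F)).range = Fintype.card F - 1 := by
    rw [Nat.card_congr (MonoidHom.ofInjective (dm_injective (F := F))).toEquiv.symm,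
      Nat.card_eq_fintype_card, Fintype.card_units]
  have hcycD : IsCyclic (dm (F := F)).range :=
    isCyclic_of_surjective _ (dm (F := F)).rangeRestrict_surjective
  have hnegD : (-1 : SL(2, F)) ∈ (dm (F := F)).range := ⟨-1, dm_neg_one⟩
  by_cases hsq : IsSquare (-1 : F)
  · -- `-1` is a square : α fixes the split torus and inverts the nonsplit one
    obtain ⟨δ, hδ⟩ := FiniteField.exists_nonsquare (F := F) hch
    obtain ⟨r, hr⟩ := hsq
    have hr0 : r ≠ 0 := by
      intro h
      rw [h, mul_zero] at hr
      exact absurd hr (by norm_num)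
    set iu : Fˣ := Units.mk0 r hr0 with hiu
    have hi : (iu : F) * iu = -1 := hr.symm
    have hival := iu_inv_val hi
    have hne2 : (iu : F) ≠ -(iu : F) := by
      intro h
      have h20 : (2 : F) * iu = 0 := by linear_combination h
      rcases mul_eq_zero.mp h20 with h' | h'
      · exact h2 h'
      · exact iu.ne_zero h'
    have hu1 : dm iu * u0 * (dm iu)⁻¹ ≠ u0 := by
      intro h
      rw [mul_inv_eq_iff_eq_mul] at h
      have he := congrArg (fun M : SL(2, F) => M.1 0 1) h
      simp only [dm, u0, MonoidHom.coe_mk, OneHom.coe_mk, Matrix.SpecialLinearGroup.coe_mul, mkSL_val,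
        Matrix.mul_apply, Fin.sum_univ_two, Matrix.of_apply, Matrix.cons_val', hival,
        Matrix.cons_val_zero, Matrix.cons_val_one, Matrix.head_cons, Matrix.empty_val',
        Matrix.cons_val_fin_one, Matrix.head_fin_const, mul_one, one_mul, mul_zero, zero_mul,
        add_zero, zero_add] at he
      exact hne2 he
    have hu2 : dm iu * u0 * (dm iu)⁻¹ ≠ -u0 := by
      intro h
      rw [mul_inv_eq_iff_eq_mul] at h
      have he := congrArg (fun M : SL(2, F) => M.1 0 0) h
      simp only [dm, u0, MonoidHom.coe_mk, OneHom.coe_mk, Matrix.SpecialLinearGroup.coe_mul, mkSL_val,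
        Matrix.SpecialLinearGroup.coe_neg, Matrix.neg_apply,
        Matrix.mul_apply, Fin.sum_univ_two, Matrix.of_apply, Matrix.cons_val', hival,
        Matrix.cons_val_zero, Matrix.cons_val_one, Matrix.head_cons, Matrix.empty_val',
        Matrix.cons_val_fin_one, Matrix.head_fin_const, mul_one, one_mul, mul_zero, zero_mul,
        add_zero, zero_add, neg_mul, neg_zero] at he
      exact hne2 he
    obtain ⟨S, R, α, ha1, ha2, ha3, ha4, ha5, ha6, ha7, ha8⟩ :=
      master hch (dm (F := F)).range (Tsub δ) hcycD (isCyclic_Tsub hδ) hnegD neg_one_mem_Tsub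
        (dm iu) (zA_sq hi)
        (by rintro M ⟨v, rfl⟩; rw [← _root_.map_mul, ← _root_.map_mul, mul_comm])
        (fun M hM => zA_inv hi hM) u0 hu1 hu2
    rw [hcardD] at ha5
    rw [card_Tsub h2 hδ] at ha6
    exact ⟨S, R, α, ha1, ha2, ha3, ha4, Or.inl ⟨by omega, by omega⟩, ha7, ha8⟩
  · -- `-1` is not a square : α fixes the nonsplit torus and inverts the split one
    have hu1 : (wSL : SL(2, F)) * u0 * wSL⁻¹ ≠ u0 := by
      intro h
      rw [mul_inv_eq_iff_eq_mul] at h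
      have he := congrArg (fun M : SL(2, F) => M.1 0 0) h
      simp only [wSL, u0, Matrix.SpecialLinearGroup.coe_mul, mkSL_val,
        Matrix.mul_apply, Fin.sum_univ_two, Matrix.of_apply, Matrix.cons_val',
        Matrix.cons_val_zero, Matrix.cons_val_one, Matrix.head_cons, Matrix.empty_val',
        Matrix.cons_val_fin_one, Matrix.head_fin_const, mul_one, one_mul, mul_zero, zero_mul,
        add_zero, zero_add] at he
      -- he : (0 : F) = -1
      exact absurd he (by norm_num)
    have hu2 : (wSL : SL(2, F)) * u0 * wSL⁻¹ ≠ -u0 := by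
      intro h
      rw [mul_inv_eq_iff_eq_mul] at h
      have he := congrArg (fun M : SL(2, F) => M.1 0 1) h
      simp only [wSL, u0, Matrix.SpecialLinearGroup.coe_mul, mkSL_val,
        Matrix.SpecialLinearGroup.coe_neg, Matrix.neg_apply,
        Matrix.mul_apply, Fin.sum_univ_two, Matrix.of_apply, Matrix.cons_val',
        Matrix.cons_val_zero, Matrix.cons_val_one, Matrix.head_cons, Matrix.empty_val',
        Matrix.cons_val_fin_one, Matrix.head_fin_const, mul_one, one_mul, mul_zero, zero_mul,
        add_zero, zero_add, neg_mul, neg_zero] at he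
      -- he : (1 : F) = -1
      exact Ring.neg_one_ne_one_of_char_ne_two hch he.symm
    obtain ⟨S, R, α, ha1, ha2, ha3, ha4, ha5, ha6, ha7, ha8⟩ :=
      master hch (Tsub (-1 : F)) (dm (F := F)).range (isCyclic_Tsub hsq) hcycD
        neg_one_mem_Tsub hnegD wSL wSL_sq
        (fun M hM => Tsub_comm wSL_mem hM)
        (by rintro M ⟨v, rfl⟩; exact wSL_inv_dm v) u0 hu1 hu2
    rw [card_Tsub h2 hsq] at ha5
    rw [hcardD] at ha6
    exact ⟨S, R, α, ha1, ha2, ha3, ha4, Or.inr ⟨by omega, by omega⟩, ha7, ha8⟩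
end

section
/- Every element of SL(2,K) over a field K with |K| > 3 is a product of at most 4 elementary unipotent matrices (upper or lower unitriangular matrices). -/
open Matrix MatrixGroups

/-- An element of `SL(2,K)` is elementary unipotent if it is upper or lower
unitriangular. -/
def IsElementaryUnipotent {K : Type*} [Field K] (B : SL(2, K)) : Prop :=
  ∃ t : K, (B : Matrix (Fin 2) (Fin 2) K) = !![1, t; 0, 1] ∨
    (B : Matrix (Fin 2) (Fin 2) K) = !![1, 0; t, 1]

private def UU {K : Type*} [Field K] (t : K) : SL(2, K) :=
  ⟨!![1, t; 0, 1], by simp [Matrix.det_fin_two_of]⟩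

private def LL {K : Type*} [Field K] (t : K) : SL(2, K) :=
  ⟨!![1, 0; t, 1], by simp [Matrix.det_fin_two_of]⟩

private lemma UU_elem {K : Type*} [Field K] (t : K) : IsElementaryUnipotent (UU t) :=
  ⟨t, Or.inl rfl⟩

private lemma LL_elem {K : Type*} [Field K] (t : K) : IsElementaryUnipotent (LL t) :=
  ⟨t, Or.inr rfl⟩

private lemma decomp_c_ne_zero {K : Type*} [Field K] (a b c d : K)
    (hdet : a * d - b * c = 1) (hc : c ≠ 0) :
    ((UU ((a - 1) / c) * LL c * UU ((d - 1) / c) : SL(2, K)) :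
      Matrix (Fin 2) (Fin 2) K) = !![a, b; c, d] := by
  show (!![1, ((a - 1) / c); 0, 1] * !![1, 0; c, 1] * !![1, ((d - 1) / c); 0, 1] : Matrix (Fin 2) (Fin 2) K) = _
  simp only [Matrix.mul_fin_two]
  ext i j
  fin_cases i <;> fin_cases j <;>
    simp <;>
    field_simp <;> grind

private lemma decomp_b_ne_zero {K : Type*} [Field K] (a b c d : K)
    (hdet : a * d - b * c = 1) (hb : b ≠ 0) :
    ((LL ((d - 1) / b) * UU b * LL ((a - 1) / b) : SL(2, K)) :
      Matrix (Fin 2) (Fin 2) K) = !![a, b; c, d] := by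
  show (!![1, 0; ((d - 1) / b), 1] * !![1, b; 0, 1] * !![1, 0; ((a - 1) / b), 1] : Matrix (Fin 2) (Fin 2) K) = _
  simp only [Matrix.mul_fin_two]
  ext i j
  fin_cases i <;> fin_cases j <;>
    simp <;>
    field_simp <;> grind

theorem sl2_prod_of_at_most_four_unipotents (K : Type*) [Field K]
    (hK : 3 < Nat.card K ∨ Infinite K) (A : SL(2, K)) :
    ∃ l : List (SL(2, K)), l.length ≤ 4 ∧ (∀ B ∈ l, IsElementaryUnipotent B) ∧
      l.prod = A := by
  set a := (A : Matrix (Fin 2) (Fin 2) K) 0 0 with ha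
  set b := (A : Matrix (Fin 2) (Fin 2) K) 0 1 with hb
  set c := (A : Matrix (Fin 2) (Fin 2) K) 1 0 with hc
  set d := (A : Matrix (Fin 2) (Fin 2) K) 1 1 with hd
  have hAmat : (A : Matrix (Fin 2) (Fin 2) K) = !![a, b; c, d] := by
    rw [ha, hb, hc, hd]; exact (Matrix.eta_fin_two _)
  have hdet : a * d - b * c = 1 := by
    have := A.2
    rwa [Matrix.det_fin_two, ← ha, ← hb, ← hc, ← hd] at this
  by_cases hc0 : c ≠ 0
  · refine ⟨[UU ((a - 1) / c), LL c, UU ((d - 1) / c)], by norm_num, ?_, ?_⟩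
    · rintro B hB
      simp only [List.mem_cons, List.not_mem_nil, or_false] at hB
      rcases hB with rfl | rfl | rfl
      exacts [UU_elem _, LL_elem _, UU_elem _]
    · apply Subtype.ext
      simp only [List.prod_cons, List.prod_nil, mul_one, hAmat]
      rw [← mul_assoc]
      exact decomp_c_ne_zero a b c d hdet hc0
  · push_neg at hc0
    by_cases hb0 : b ≠ 0
    · refine ⟨[LL ((d - 1) / b), UU b, LL ((a - 1) / b)], by norm_num, ?_, ?_⟩
      · rintro B hB
        simp only [List.mem_cons, List.not_mem_nil, or_false] at hB
        rcases hB with rfl | rfl | rfl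
        exacts [LL_elem _, UU_elem _, LL_elem _]
      · apply Subtype.ext
        simp only [List.prod_cons, List.prod_nil, mul_one, hAmat]
        rw [← mul_assoc]
        exact decomp_b_ne_zero a b c d hdet hb0
    · push_neg at hb0
      -- b = c = 0, so A = diag(a, d) with a * d = 1, a ≠ 0
      have had : a * d = 1 := by linear_combination hdet + b * hc0
      have ha0 : a ≠ 0 := left_ne_zero_of_mul_eq_one had
      -- A = LL 1 * B where B = !![a, 0; -a, d]
      have hdet2 : a * d - 0 * (-a) = 1 := by rw [had]; ring
      have hna : (-a) ≠ 0 := neg_ne_zero.mpr ha0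
      refine ⟨[LL 1, UU ((a - 1) / (-a)), LL (-a), UU ((d - 1) / (-a))],
        by norm_num, ?_, ?_⟩
      · rintro B hB
        simp only [List.mem_cons, List.not_mem_nil, or_false] at hB
        rcases hB with rfl | rfl | rfl | rfl
        exacts [LL_elem _, UU_elem _, LL_elem _, UU_elem _]
      · apply Subtype.ext
        simp only [List.prod_cons, List.prod_nil, mul_one]
        rw [← mul_assoc (UU ((a - 1) / (-a))), Matrix.SpecialLinearGroup.coe_mul,
          decomp_c_ne_zero a 0 (-a) d hdet2 hna, hAmat, hb0, hc0]
        simp [LL, Matrix.mul_fin_two]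
end

section
/- In PGL(2,q) with q odd, every unipotent element (image of a nontrivial unipotent element of GL(2,q)) can be written as a product of two involutions. -/
/-!
Over a field of characteristic `≠ 2`, the unipotent matrix `!![1, 1; 0, 1]` factors as
`!![1, 0; 0, -1] * !![1, 1; 0, -1]`, a product of two matrices squaring to `1`. They do not
commute (the two products have `(0, 1)` entries `1` and `-1`), so neither is central and both
have order exactly `2` in `PGL(2, F)`. Being a product of two involutions is invariant under conjugation.
-/

open Matrix MatrixGroups

abbrev PGL2 (F : Type*) [Field F] :=
  GL (Fin 2) F ⧸ Subgroup.center (GL (Fin 2) F)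

section Group

variable {G : Type*} [Group G]

def IsProdTwoInvolutions (x : G) : Prop :=
  ∃ i j : G, orderOf i = 2 ∧ orderOf j = 2 ∧ x = i * j

theorem IsProdTwoInvolutions.conj {x : G} (hx : IsProdTwoInvolutions x) (c : G) :
    IsProdTwoInvolutions (c * x * c⁻¹) := by
  obtain ⟨i, j, hi, hj, rfl⟩ := hx
  refine ⟨c * i * c⁻¹, c * j * c⁻¹, ?_, ?_, by group⟩
  · rwa [← MulAut.conj_apply, MulEquiv.orderOf_eq]
  · rwa [← MulAut.conj_apply, MulEquiv.orderOf_eq]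

theorem orderOf_mk_eq_two {N : Subgroup G} [N.Normal] {g : G} (hg : g ^ 2 = 1) (hgN : g ∉ N) :
    orderOf (g : G ⧸ N) = 2 :=
  orderOf_eq_prime (by rw [← QuotientGroup.mk_pow, hg, QuotientGroup.mk_one])
    (by rwa [Ne, QuotientGroup.eq_one_iff])

theorem orderOf_mk_center_eq_two {g h : G} (hg : g ^ 2 = 1) (hgh : g * h ≠ h * g) :
    orderOf (g : G ⧸ Subgroup.center G) = 2 :=
  orderOf_mk_eq_two hg fun hc => hgh (Subgroup.mem_center_iff.mp hc h).symm

end Group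

section Field

variable {F : Type*} [Field F]

theorem unipotent_eq_diag_mul_reflection :
    !![1, 1; 0, 1] = !![1, 0; 0, -1] * (!![1, 1; 0, -1] : Matrix (Fin 2) (Fin 2) F) := by
  simp

theorem diag_mul_reflection_ne_reflection_mul_diag (hF : ringChar F ≠ 2) :
    !![1, 0; 0, -1] * (!![1, 1; 0, -1] : Matrix (Fin 2) (Fin 2) F) ≠
      !![1, 1; 0, -1] * !![1, 0; 0, -1] := by
  intro h
  have h01 := congrFun (congrFun h 0) 1
  simp only [Matrix.mul_fin_two, Matrix.of_apply, Matrix.cons_val', Matrix.cons_val_zero,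
    Matrix.cons_val_one, Matrix.empty_val', Matrix.cons_val_fin_one] at h01
  exact hF (neg_one_eq_one_iff.mp (by linear_combination -h01))

theorem isProdTwoInvolutions_mk_of_val_eq_unipotent (hF : ringChar F ≠ 2) {U : GL (Fin 2) F}
    (hU : (U : Matrix (Fin 2) (Fin 2) F) = !![1, 1; 0, 1]) :
    IsProdTwoInvolutions (U : PGL2 F) := by
  have hA : (!![1, 1; 0, -1] : Matrix (Fin 2) (Fin 2) F) ^ 2 = 1 := by
    simp [sq, Matrix.one_fin_two]
  have hB : (!![1, 0; 0, -1] : Matrix (Fin 2) (Fin 2) F) ^ 2 = 1 := by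
    simp [sq, Matrix.one_fin_two]
  set A := Units.ofPowEqOne _ 2 hA two_ne_zero
  set B := Units.ofPowEqOne _ 2 hB two_ne_zero
  have hBA : B * A ≠ A * B := fun h =>
    diag_mul_reflection_ne_reflection_mul_diag hF (congrArg Units.val h)
  refine ⟨B, A, orderOf_mk_center_eq_two (Units.pow_ofPowEqOne hB _) hBA,
    orderOf_mk_center_eq_two (Units.pow_ofPowEqOne hA _) hBA.symm, ?_⟩
  rw [← QuotientGroup.mk_mul]
  congr 1
  exact Units.ext (hU.trans unipotent_eq_diag_mul_reflection)

end Field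

theorem unipotent_in_pgl2_is_product_of_two_involutions
    (q : ℕ) (F : Type*) [Field F] [Fintype F]
    (hq : Fintype.card F = q) (hodd : Odd q) (x : PGL2 F)
    (hx : ∃ M U C : GL (Fin 2) F,
      QuotientGroup.mk' (Subgroup.center (GL (Fin 2) F)) M = x ∧
      (U : Matrix (Fin 2) (Fin 2) F) = !![1, 1; 0, 1] ∧
      M = C * U * C⁻¹) :
    ∃ i j : PGL2 F, orderOf i = 2 ∧ orderOf j = 2 ∧ x = i * j := by
  obtain ⟨M, U, C, rfl, hU, rfl⟩ := hx
  have hF : ringChar F ≠ 2 := fun h2 => by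
    simpa [hq, Nat.odd_iff.mp hodd] using FiniteField.even_card_of_char_two h2
  rw [QuotientGroup.mk'_apply, QuotientGroup.mk_mul, QuotientGroup.mk_inv]
  exact (isProdTwoInvolutions_mk_of_val_eq_unipotent hF hU).conj (C : PGL2 F)
end
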